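/- Let K be a finite set of finite algebras and A ∈ Q(K). Then A is Q(K)-subdirectly irreducible if and only if the intersection of all non-identity congruences θ on A with A/θ ∈ IS(K) is not the identity congruence Δ_A. -/

import Mathlib

/-- An algebraic signature: a type of operation symbols with arities. -/
structure Signature where
  ops : Type
  arity : ops → ℕ

/-- An algebra for a signature `S`. -/
structure Alg (S : Signature) where
  carrier : Type
  interp : ∀ o : S.ops, (Fin (S.arity o) → carrier) → carrier

/-- Terms over a set `X` of variables. -/
inductive Term (S : Signature) (X : Type) : Type where
  | var : X → Term S X
  | op : (o : S.ops) → (Fin (S.arity o) → Term S X) → Term S X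

variable {S : Signature}

/-- Evaluation of a term in an algebra under an assignment of variables. -/
def Term.eval {X : Type} (A : Alg S) (h : X → A.carrier) : Term S X → A.carrier
  | .var x => h x
  | .op o args => A.interp o (fun i => (args i).eval A h)

/-- Application of a substitution to a term. -/
def Term.subst (σ : ℕ → Term S ℕ) : Term S ℕ → Term S ℕ
  | .var x => σ x
  | .op o args => .op o (fun i => (args i).subst σ)

/-- Homomorphisms of algebras. -/
def IsHom (A B : Alg S) (f : A.carrier → B.carrier) : Prop :=
  ∀ (o : S.ops) (args : Fin (S.arity o) → A.carrier),
    f (A.interp o args) = B.interp o (fun i => f (args i))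

/-- Embeddings of algebras: injective homomorphisms. -/
def IsEmbedding (A B : Alg S) (f : A.carrier → B.carrier) : Prop :=
  IsHom A B f ∧ Function.Injective f

/-- `A` embeds into `B` (i.e. `A` is isomorphic to a subalgebra of `B`). -/
def Embeds (A B : Alg S) : Prop := ∃ f, IsEmbedding A B f

/-- Isomorphism of algebras. -/
def Iso (A B : Alg S) : Prop := ∃ f, IsHom A B f ∧ Function.Bijective f

/-- Product of a family of algebras. -/
def ProdAlg {I : Type} (F : I → Alg S) : Alg S where
  carrier := ∀ i, (F i).carrier
  interp o args i := (F i).interp o (fun j => args j i)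

/-- Binary product of algebras. -/
def Alg.prod (A B : Alg S) : Alg S where
  carrier := A.carrier × B.carrier
  interp o args := (A.interp o (fun i => (args i).1), B.interp o (fun i => (args i).2))

/-- `A` is a subdirect product of the family `F`: there is an embedding of `A`
into the product whose composition with each projection is surjective. -/
def IsSubdirectProduct (A : Alg S) {I : Type} (F : I → Alg S) : Prop :=
  ∃ f : A.carrier → (ProdAlg F).carrier,
    IsEmbedding A (ProdAlg F) f ∧ ∀ i, Function.Surjective (fun a => f a i)

/-- An equation: an ordered pair of terms. -/
abbrev Eqn (S : Signature) (X : Type) := Term S X × Term S X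

/-- An equation holds in an algebra. -/
def Alg.SatisfiesEqn {X : Type} (A : Alg S) (e : Eqn S X) : Prop :=
  ∀ h : X → A.carrier, e.1.eval A h = e.2.eval A h

/-- An equation is valid in a class of algebras. -/
def EqValid (K : Set (Alg S)) (e : Eqn S ℕ) : Prop := ∀ A ∈ K, A.SatisfiesEqn e

/-- A quasiequation: finitely many premises and one conclusion. -/
structure Quasieq (S : Signature) where
  prem : List (Eqn S ℕ)
  concl : Eqn S ℕ

/-- A quasiequation holds in an algebra. -/
def Alg.SatisfiesQ (A : Alg S) (q : Quasieq S) : Prop :=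
  ∀ h : ℕ → A.carrier,
    (∀ e ∈ q.prem, e.1.eval A h = e.2.eval A h) →
      q.concl.1.eval A h = q.concl.2.eval A h

/-- The quasivariety generated by `K`: the class axiomatized by all
quasiequations valid in `K`. -/
def QGen (K : Set (Alg S)) : Set (Alg S) :=
  { A | ∀ q : Quasieq S, (∀ B ∈ K, B.SatisfiesQ q) → A.SatisfiesQ q }

/-- The variety generated by `K`: the class axiomatized by all
equations valid in `K`. -/
def VGen (K : Set (Alg S)) : Set (Alg S) :=
  { A | ∀ e : Eqn S ℕ, (∀ B ∈ K, B.SatisfiesEqn e) → A.SatisfiesEqn e }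

/-- A quasivariety is a class axiomatizable by quasiequations. -/
def IsQuasivariety (Q : Set (Alg S)) : Prop := QGen Q = Q

/-- `A` is `Q`-subdirectly irreducible: `A ∈ Q` and for every `Q`-subdirect
representation of `A`, `A` is isomorphic to one of the components. -/
def QSubdirectlyIrreducible (Q : Set (Alg S)) (A : Alg S) : Prop :=
  A ∈ Q ∧ ∀ (I : Type) (F : I → Alg S), (∀ i, F i ∈ Q) →
    IsSubdirectProduct A F → ∃ i, Iso A (F i)

/-- A congruence on an algebra. -/
structure Cong (A : Alg S) where
  r : A.carrier → A.carrier → Prop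
  iseqv : Equivalence r
  compat : ∀ (o : S.ops) (a b : Fin (S.arity o) → A.carrier),
    (∀ i, r (a i) (b i)) → r (A.interp o a) (A.interp o b)

def Cong.setoid {A : Alg S} (θ : Cong A) : Setoid A.carrier := ⟨θ.r, θ.iseqv⟩

/-- Quotient algebra of `A` by a congruence `θ`. -/
noncomputable def QuotAlg (A : Alg S) (θ : Cong A) : Alg S where
  carrier := Quotient θ.setoid
  interp o args := Quotient.mk θ.setoid (A.interp o (fun i => (args i).out))

/-- The term algebra over variables `X`. -/
def TermAlg (S : Signature) (X : Type) : Alg S where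
  carrier := Term S X
  interp := Term.op

/-- The congruence of all identifications valid in `K` on the term algebra:
the intersection of all congruences whose quotient embeds into a member of `K`. -/
def freeCong (K : Set (Alg S)) (X : Type) : Cong (TermAlg S X) where
  r φ ψ := ∀ A ∈ K, ∀ h : X → A.carrier, φ.eval A h = ψ.eval A h
  iseqv := by
    constructor
    · intro φ A hA h; rfl
    · intro φ ψ H A hA h; exact (H A hA h).symm
    · intro a b c H1 H2 A hA h; exact (H1 A hA h).trans (H2 A hA h)
  compat := by
    intro o a b hab A hA h
    show Term.eval A h (Term.op o a) = Term.eval A h (Term.op o b)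
    simp only [Term.eval]
    congr 1
    funext i
    exact hab i A hA h

/-- The free algebra of `K` over variables `X`. -/
noncomputable def FreeAlg (K : Set (Alg S)) (X : Type) : Alg S :=
  QuotAlg (TermAlg S X) (freeCong K X)

/-- `σ` is a `K`-unifier of the finite set of equations `Γ`. -/
def Unifier (K : Set (Alg S)) (σ : ℕ → Term S ℕ) (Γ : List (Eqn S ℕ)) : Prop :=
  ∀ e ∈ Γ, EqValid K (e.1.subst σ, e.2.subst σ)

/-- `Γ` is `K`-unifiable. -/
def Unifiable (K : Set (Alg S)) (Γ : List (Eqn S ℕ)) : Prop := ∃ σ, Unifier K σ Γ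

/-- The quasiequation `Γ ⇒ e` is `K`-admissible: every `K`-unifier of the
premises unifies the conclusion. -/
def Admissible (K : Set (Alg S)) (Γ : List (Eqn S ℕ)) (e : Eqn S ℕ) : Prop :=
  ∀ σ, Unifier K σ Γ → EqValid K (e.1.subst σ, e.2.subst σ)

/-- The quasiequation `Γ ⇒ e` is valid in the class `K` (`Γ ⊨_K e`). -/
def Models (K : Set (Alg S)) (Γ : List (Eqn S ℕ)) (e : Eqn S ℕ) : Prop :=
  ∀ A ∈ K, ∀ h : ℕ → A.carrier,
    (∀ e' ∈ Γ, e'.1.eval A h = e'.2.eval A h) → e.1.eval A h = e.2.eval A h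

/-- `Γ` is satisfiable in the algebra `A`. -/
def SatIn (A : Alg S) (Γ : List (Eqn S ℕ)) : Prop :=
  ∃ h : ℕ → A.carrier, ∀ e ∈ Γ, e.1.eval A h = e.2.eval A h

/-!
Over a finite signature, distinct elements `x ≠ y` of `A ∈ Q(K)` are separated by a
homomorphism into a member of `K`: on a finite part of `A` such a map comes from the failure in
`K` of the quasiequation "diagram of that part ⇒ `x = y`", and these partial maps glue by
compactness since `K` is a finite set of finite algebras. Hence if the non-identity congruences
`θ` with `A/θ ∈ IS(K)` meet in `Δ_A`, then `A` is a subdirect product of finite proper quotients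
of itself and is not `Q(K)`-subdirectly irreducible. Conversely, in a subdirect representation
without an injective projection, a projection `πᵢ` with `πᵢ a ≠ πᵢ b` followed by a separating
homomorphism into `K` has a non-identity kernel omitting `(a, b)`.
-/

theorem Term.eval_comp_of_isHom {A B : Alg S} {f : A.carrier → B.carrier} (hf : IsHom A B f)
    {X : Type} (h : X → A.carrier) (t : Term S X) : t.eval B (f ∘ h) = f (t.eval A h) := by
  induction t with
  | var x => rfl
  | op o args ih =>
    simp only [Term.eval, hf o, ih]

theorem IsHom.comp {A B C : Alg S} {f : A.carrier → B.carrier} {g : B.carrier → C.carrier}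
    (hf : IsHom A B f) (hg : IsHom B C g) : IsHom A C (g ∘ f) := by
  intro o args
  simp only [Function.comp_apply, hf o, hg o]

theorem subset_QGen (K : Set (Alg S)) : K ⊆ QGen K :=
  fun _ hB _ hq => hq _ hB

theorem mem_QGen_of_embeds {K : Set (Alg S)} {A B : Alg S} (hAB : Embeds A B)
    (hB : B ∈ QGen K) : A ∈ QGen K := by
  obtain ⟨f, hf, hinj⟩ := hAB
  intro q hq h hprem
  apply hinj
  rw [← Term.eval_comp_of_isHom hf, ← Term.eval_comp_of_isHom hf]
  refine hB q hq (f ∘ h) fun e he => ?_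
  rw [Term.eval_comp_of_isHom hf, Term.eval_comp_of_isHom hf, hprem e he]

theorem isHom_quotientMk (A : Alg S) (θ : Cong A) :
    IsHom A (QuotAlg A θ) (Quotient.mk θ.setoid) := by
  intro o args
  refine Quotient.sound (θ.compat o _ _ fun i => ?_)
  exact Quotient.exact (Quotient.out_eq (Quotient.mk θ.setoid (args i))).symm

def Cong.ker {A B : Alg S} (g : A.carrier → B.carrier) (hg : IsHom A B g) : Cong A where
  r a b := g a = g b
  iseqv := ⟨fun _ => rfl, Eq.symm, Eq.trans⟩
  compat o a b h := by simp only [hg o, h]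

theorem Cong.embeds_quotAlg_ker {A B : Alg S} (g : A.carrier → B.carrier) (hg : IsHom A B g) :
    Embeds (QuotAlg A (Cong.ker g hg)) B := by
  refine ⟨Quotient.lift g fun _ _ h => h, fun o args => ?_, fun a b => ?_⟩
  · show g (A.interp o _) = B.interp o _
    simp only [hg o]
    congr 1
    funext i
    conv_rhs => rw [← Quotient.out_eq (args i)]
    rfl
  · induction a, b using Quotient.inductionOn₂
    exact fun h => Quotient.sound h

def IsHomOn (A B : Alg S) (g : A.carrier → B.carrier) (F : Set A.carrier) : Prop :=
  ∀ (o : S.ops) (args : Fin (S.arity o) → A.carrier), (∀ i, args i ∈ F) →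
    A.interp o args ∈ F → g (A.interp o args) = B.interp o (fun i => g (args i))

theorem IsHomOn.mono {A B : Alg S} {g : A.carrier → B.carrier} {F G : Set A.carrier}
    (hG : IsHomOn A B g G) (hFG : F ⊆ G) : IsHomOn A B g F :=
  fun o args hargs hres => hG o args (fun i => hFG (hargs i)) (hFG hres)

theorem exists_refutation_of_mem_QGen {K : Set (Alg S)} {C : Alg S} (hC : C ∈ QGen K)
    {Γ : Set (Eqn S ℕ)} (hΓ : Γ.Finite) (e : Eqn S ℕ) (h₀ : ℕ → C.carrier)
    (hΓ₀ : ∀ e' ∈ Γ, e'.1.eval C h₀ = e'.2.eval C h₀) (he₀ : e.1.eval C h₀ ≠ e.2.eval C h₀) :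
    ∃ B ∈ K, ∃ h : ℕ → B.carrier,
      (∀ e' ∈ Γ, e'.1.eval B h = e'.2.eval B h) ∧ e.1.eval B h ≠ e.2.eval B h := by
  by_contra! hK
  refine he₀ (hC ⟨hΓ.toFinset.toList, e⟩ (fun B hB h hprem => hK B hB h fun e' he' => ?_) h₀
    fun e' he' => hΓ₀ e' ?_)
  · exact hprem e' (by simpa using he')
  · simpa using he'

theorem exists_isHomOn_separating_of_mem_QGen [Finite S.ops] {K : Set (Alg S)} {C : Alg S}
    (hC : C ∈ QGen K) {x y : C.carrier} (hxy : x ≠ y) (F : Finset C.carrier) :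
    ∃ B ∈ K, ∃ g : C.carrier → B.carrier, IsHomOn C B g F ∧ g x ≠ g y := by
  classical
  let F₁ : Finset C.carrier := insert x (insert y F)
  obtain ⟨ι, hι⟩ := Set.countable_iff_exists_injOn.mp (F₁ : Set C.carrier).toFinite.countable
  have : Nonempty C.carrier := ⟨x⟩
  have hret := hι.leftInvOn_invFunOn
  let Table := {p : Σ o : S.ops, Fin (S.arity o) → F₁ // C.interp p.1 (fun i => p.2 i) ∈ F₁}
  -- the operation table of `F₁`, with `c ∈ F₁` named by the variable `ι c`
  let diagram : Table → Eqn S ℕ := fun p =>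
    (.op p.1.1 (fun i => .var (ι (p.1.2 i))), .var (ι (C.interp p.1.1 (fun i => p.1.2 i))))
  have hdiagC : ∀ e ∈ Set.range diagram,
      e.1.eval C (Function.invFunOn ι F₁) = e.2.eval C (Function.invFunOn ι F₁) := by
    rintro _ ⟨⟨⟨o, args⟩, hres⟩, rfl⟩
    simp only [diagram, Term.eval, hret (args _).2, hret hres]
  have hsepC : Term.eval C (Function.invFunOn ι F₁) (.var (ι x))
      ≠ Term.eval C (Function.invFunOn ι F₁) (.var (ι y)) := by
    simpa only [Term.eval, hret (Finset.mem_insert_self x _),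
      hret (Finset.mem_insert_of_mem (Finset.mem_insert_self y _))] using hxy
  obtain ⟨B, hB, h, hdiag, hsep⟩ := exists_refutation_of_mem_QGen hC (Set.finite_range diagram)
    (.var (ι x), .var (ι y)) _ hdiagC hsepC
  have hF₁ : ∀ {c}, c ∈ F → c ∈ F₁ :=
    fun hc => Finset.mem_insert_of_mem (Finset.mem_insert_of_mem hc)
  refine ⟨B, hB, h ∘ ι, fun o args hargs hres => ?_, hsep⟩
  exact (hdiag _ ⟨⟨⟨o, fun i => ⟨args i, hF₁ (hargs i)⟩⟩, hF₁ hres⟩, rfl⟩).symm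

theorem Set.Finite.exists_mem_forall_of_antitone {α ι : Type*} [Preorder ι]
    [IsDirectedOrder ι] [Nonempty ι] {s : Set α} (hs : s.Finite) {P : α → ι → Prop}
    (hP : ∀ a, Antitone (P a)) (h : ∀ i, ∃ a ∈ s, P a i) : ∃ a ∈ s, ∀ i, P a i := by
  by_contra! hne
  have hev : ∀ a ∈ s, ∀ᶠ i in Filter.atTop, ¬ P a i := fun a ha => by
    obtain ⟨i₀, hi₀⟩ := hne a ha
    exact Filter.eventually_atTop.2 ⟨i₀, fun i hi hPi => hi₀ (hP a hi hPi)⟩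
  obtain ⟨i, hi⟩ := ((Filter.eventually_all_finite hs).2 hev).exists
  obtain ⟨a, ha, hPa⟩ := h i
  exact hi a ha hPa

theorem exists_isHom_separating_of_forall_isHomOn {C B : Alg S} [Finite B.carrier]
    {x y : C.carrier}
    (h : ∀ F : Finset C.carrier, ∃ g : C.carrier → B.carrier, IsHomOn C B g F ∧ g x ≠ g y) :
    ∃ g : C.carrier → B.carrier, IsHom C B g ∧ g x ≠ g y := by
  classical
  -- `C → B` is compact for the product of discrete topologies
  let _ : TopologicalSpace B.carrier := ⊥
  have : DiscreteTopology B.carrier := ⟨rfl⟩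
  let T : Finset C.carrier → Set (C.carrier → B.carrier) := fun F =>
    (⋂ (o) (args : Fin (S.arity o) → C.carrier) (_ : ∀ i, args i ∈ F) (_ : C.interp o args ∈ F),
      {g | g (C.interp o args) = B.interp o (fun i => g (args i))}) ∩ {g | g x ≠ g y}
  have hT : ∀ F g, g ∈ T F ↔ IsHomOn C B g F ∧ g x ≠ g y := by
    simp [T, IsHomOn]
  have hne : IsClosed {g : C.carrier → B.carrier | g x ≠ g y} :=
    (isClosed_discrete {p : B.carrier × B.carrier | p.1 ≠ p.2}).preimage
      (f := fun g : C.carrier → B.carrier => (g x, g y)) (by fun_prop)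
  have hclosed : ∀ F, IsClosed (T F) := fun F =>
    (isClosed_iInter fun o => isClosed_iInter fun args => isClosed_iInter fun _ =>
      isClosed_iInter fun _ => isClosed_eq (continuous_apply _)
        (continuous_of_discreteTopology.comp (continuous_pi fun i => continuous_apply _))).inter
      hne
  obtain ⟨g, hg⟩ := IsCompact.nonempty_iInter_of_directed_nonempty_isCompact_isClosed T
    (directed_of_isDirected_le fun F G hFG g hg =>
      (hT F g).2 ⟨((hT G g).1 hg).1.mono (by exact_mod_cast hFG), ((hT G g).1 hg).2⟩)
    (fun F => (h F).imp fun g hg => (hT F g).2 hg) (fun F => (hclosed F).isCompact) hclosed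
  have hgT : ∀ F : Finset C.carrier, IsHomOn C B g F ∧ g x ≠ g y :=
    fun F => (hT F g).1 (Set.mem_iInter.1 hg F)
  refine ⟨g, fun o args => (hgT (insert (C.interp o args) (Finset.univ.image args))).1 o args
    (fun i => ?_) ?_, (hgT ∅).2⟩ <;> simp

theorem exists_isHom_separating_of_mem_QGen [Finite S.ops] {K : Set (Alg S)} (hK : K.Finite)
    (hfin : ∀ B ∈ K, Finite B.carrier) {C : Alg S} (hC : C ∈ QGen K) {x y : C.carrier}
    (hxy : x ≠ y) : ∃ B ∈ K, ∃ g : C.carrier → B.carrier, IsHom C B g ∧ g x ≠ g y := by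
  obtain ⟨B, hB, hsep⟩ := hK.exists_mem_forall_of_antitone
    (P := fun B (F : Finset C.carrier) =>
      ∃ g : C.carrier → B.carrier, IsHomOn C B g F ∧ g x ≠ g y)
    (fun B F G hFG => Exists.imp fun g hg => ⟨hg.1.mono (by exact_mod_cast hFG), hg.2⟩)
    (fun F => exists_isHomOn_separating_of_mem_QGen hC hxy F)
  have := hfin B hB
  exact ⟨B, hB, exists_isHom_separating_of_forall_isHomOn hsep⟩

theorem exists_forall_cong_of_qSubdirectlyIrreducible {K : Set (Alg S)}
    (hfin : ∀ B ∈ K, Finite B.carrier) {A : Alg S}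
    (hA : QSubdirectlyIrreducible (QGen K) A) :
    ∃ a b : A.carrier, a ≠ b ∧
      ∀ θ : Cong A, (∃ c d : A.carrier, θ.r c d ∧ c ≠ d) →
        (∃ B ∈ K, Embeds (QuotAlg A θ) B) → θ.r a b := by
  by_contra! hsep
  let I :=
    {θ : Cong A // (∃ c d : A.carrier, θ.r c d ∧ c ≠ d) ∧ ∃ B ∈ K, Embeds (QuotAlg A θ) B}
  have hsub : IsSubdirectProduct A fun θ : I => QuotAlg A θ.1 := by
    refine ⟨fun a θ => Quotient.mk θ.1.setoid a,
      ⟨fun o args => funext fun θ => isHom_quotientMk A θ.1 o args, fun a b hab => ?_⟩,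
      fun θ => Quotient.mk_surjective⟩
    by_contra hne
    obtain ⟨θ, hθ, hIS, hθab⟩ := hsep a b hne
    exact hθab (Quotient.exact (congrFun hab ⟨θ, hθ, hIS⟩))
  obtain ⟨θ, φ, -, hφ⟩ := hA.2 I _
    (fun θ => have ⟨B, hB, hAB⟩ := θ.2.2; mem_QGen_of_embeds hAB (subset_QGen K hB)) hsub
  obtain ⟨⟨c, d, hcd, hne⟩, B, hB, e, -, he⟩ := θ.2
  have := hfin B hB
  have := Finite.of_injective e he
  have := Finite.of_injective φ hφ.1
  -- `A ≅ A/θ` is finite, so the surjection `A → A/θ` is injective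
  have hinj := (Finite.injective_iff_surjective_of_equiv (Equiv.ofBijective φ hφ)).2
    (Quotient.mk_surjective (s := θ.1.setoid))
  exact hne (hinj (Quotient.sound hcd))

theorem qSubdirectlyIrreducible_of_exists_forall_cong [Finite S.ops] {K : Set (Alg S)}
    (hK : K.Finite) (hfin : ∀ B ∈ K, Finite B.carrier) {A : Alg S} (hA : A ∈ QGen K)
    (h : ∃ a b : A.carrier, a ≠ b ∧
      ∀ θ : Cong A, (∃ c d : A.carrier, θ.r c d ∧ c ≠ d) →
        (∃ B ∈ K, Embeds (QuotAlg A θ) B) → θ.r a b) :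
    QSubdirectlyIrreducible (QGen K) A := by
  obtain ⟨a, b, hab, hmin⟩ := h
  refine ⟨hA, fun I F hFQ ⟨f, ⟨hf, hfinj⟩, hfsurj⟩ => ?_⟩
  have hπ : ∀ i, IsHom A (F i) (fun u => f u i) := fun i o args => congrFun (hf o args) i
  by_contra! hnotiso
  have hπinj : ∀ i, ¬ Function.Injective fun u => f u i :=
    fun i hi => hnotiso i ⟨_, hπ i, hi, hfsurj i⟩
  obtain ⟨i, hi⟩ := Function.ne_iff.1 (hfinj.ne hab)
  obtain ⟨B, hB, g, hg, hgab⟩ := exists_isHom_separating_of_mem_QGen hK hfin (hFQ i) hi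
  obtain ⟨c, d, hcd, hne⟩ := Function.not_injective_iff.1 (hπinj i)
  have hgπ := (hπ i).comp hg
  exact hgab (hmin (Cong.ker _ hgπ) ⟨c, d, congrArg g hcd, hne⟩
    ⟨B, hB, Cong.embeds_quotAlg_ker _ hgπ⟩)

/-- For a finite set `K` of finite algebras and `A ∈ Q(K)`:
`A` is `Q(K)`-subdirectly irreducible iff the intersection of all
non-identity congruences `θ` on `A` with `A/θ ∈ IS(K)` is not the identity. -/
theorem stmt8 {S : Signature} [Finite S.ops] (K : Set (Alg S)) (hKfin : K.Finite)
    (hfin : ∀ A ∈ K, Finite A.carrier) (A : Alg S) (hA : A ∈ QGen K) :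
    QSubdirectlyIrreducible (QGen K) A ↔
      ∃ a b : A.carrier, a ≠ b ∧
        ∀ θ : Cong A, (∃ c d : A.carrier, θ.r c d ∧ c ≠ d) →
          (∃ B ∈ K, Embeds (QuotAlg A θ) B) → θ.r a b :=
  ⟨exists_forall_cong_of_qSubdirectlyIrreducible hfin,
    qSubdirectlyIrreducible_of_exists_forall_cong hKfin hfin hA⟩
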